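/- Let n ≥ 2, let T = (T_{ab}^c) be a torsion-type tensor and let i ∈ {1,…,n−1}. Then for every y ∈ ℝⁿ: Σ_{a<b, c} σ_{ab;i}^c(y)·T_{ab}^c = Σ_{k<i} (T_{ki}^n + T_{in}^k + T_{kn}^i)·y_k + 2·T_{in}^i·y_i + Σ_{i<k<n} (−T_{ik}^n + T_{in}^k + T_{kn}^i)·y_k; in particular the coordinate yₙ does not occur on the left-hand side. -/
import Mathlib


open Finset

lemma aux_sum (n : ℕ) (T : Fin n → Fin n → Fin n → ℝ) (i m : Fin n)
    (hm : ∀ k : Fin n, k ≤ m) (hi : i < m) (y : Fin n → ℝ) :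
    (∑ a : Fin n, ∑ b : Fin n, ∑ c : Fin n,
      if a < b then
        (((if i = c then (1:ℝ) else 0) * y a + (if i = a then (1:ℝ) else 0) * y c) *
          (if b = m then (1:ℝ) else 0) +
         ((if i = b then (1:ℝ) else 0) * y a - (if i = a then (1:ℝ) else 0) * y b) *
          (if c = m then (1:ℝ) else 0)) * T a b c
      else 0) =
    (∑ k : Fin n, if k < i then (T k i m + T i m k + T k m i) * y k else 0) +
      2 * T i m i * y i +
      (∑ k : Fin n, if i < k ∧ k < m then (-(T i k m) + T i m k + T k m i) * y k else 0) := by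
  have hab : ∀ a b : Fin n,
      (∑ c : Fin n, if a < b then
        (((if i = c then (1:ℝ) else 0) * y a + (if i = a then (1:ℝ) else 0) * y c) *
          (if b = m then (1:ℝ) else 0) +
         ((if i = b then (1:ℝ) else 0) * y a - (if i = a then (1:ℝ) else 0) * y b) *
          (if c = m then (1:ℝ) else 0)) * T a b c
      else 0) =
      (if a < b then if b = m then y a * T a b i else 0 else 0) +
      (if a < b then if b = m then if i = a then (∑ c : Fin n, y c * T a b c) else 0 else 0 else 0) +
      (if a < b then if i = b then y a * T a b m else 0 else 0) -
      (if a < b then if i = a then y b * T a b m else 0 else 0) := by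
    intro a b
    by_cases h1 : a < b <;> by_cases h2 : b = m <;> by_cases h3 : i = b <;> by_cases h4 : i = a <;>
      simp [h1, h2, h3, h4, ite_mul, mul_ite, zero_mul, mul_zero, one_mul, add_mul, sub_mul,
        Finset.sum_add_distrib, Finset.sum_sub_distrib, Finset.sum_ite_eq, Finset.sum_ite_eq'] <;>
      (split_ifs <;> ring)
  calc (∑ a : Fin n, ∑ b : Fin n, ∑ c : Fin n,
      if a < b then
        (((if i = c then (1:ℝ) else 0) * y a + (if i = a then (1:ℝ) else 0) * y c) *
          (if b = m then (1:ℝ) else 0) +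
         ((if i = b then (1:ℝ) else 0) * y a - (if i = a then (1:ℝ) else 0) * y b) *
          (if c = m then (1:ℝ) else 0)) * T a b c
      else 0)
      = (∑ a : Fin n, ∑ b : Fin n,
          ((if a < b then if b = m then y a * T a b i else 0 else 0) +
          (if a < b then if b = m then if i = a then (∑ c : Fin n, y c * T a b c) else 0 else 0 else 0) +
          (if a < b then if i = b then y a * T a b m else 0 else 0) -
          (if a < b then if i = a then y b * T a b m else 0 else 0))) := by
        exact Finset.sum_congr rfl fun a _ => Finset.sum_congr rfl fun b _ => hab a b
    _ = (∑ a : Fin n, ∑ b : Fin n, (if a < b then if b = m then y a * T a b i else 0 else 0)) +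
        (∑ a : Fin n, ∑ b : Fin n, (if a < b then if b = m then if i = a then (∑ c : Fin n, y c * T a b c) else 0 else 0 else 0)) +
        (∑ a : Fin n, ∑ b : Fin n, (if a < b then if i = b then y a * T a b m else 0 else 0)) -
        (∑ a : Fin n, ∑ b : Fin n, (if a < b then if i = a then y b * T a b m else 0 else 0)) := by
        simp [Finset.sum_add_distrib, Finset.sum_sub_distrib]
    _ = (∑ k : Fin n, (if k < m then y k * T k m i else 0)) +
        (∑ c : Fin n, y c * T i m c) +
        (∑ k : Fin n, (if k < i then y k * T k i m else 0)) -
        (∑ k : Fin n, (if i < k then y k * T i k m else 0)) := by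
        congr 1
        congr 1
        congr 1
        · exact Finset.sum_congr rfl fun a _ => by
            rw [Finset.sum_eq_single m (fun b _ hb => by simp [hb]) (by simp)]; simp
        · have h1 : ∀ a : Fin n, (∑ b : Fin n, (if a < b then if b = m then if i = a then (∑ c : Fin n, y c * T a b c) else 0 else 0 else 0)) = (if a < m then if i = a then (∑ c : Fin n, y c * T a m c) else 0 else 0) := by
            intro a
            rw [Finset.sum_eq_single m (fun b _ hb => by simp [hb]) (by simp)]; simp
          rw [Finset.sum_congr rfl fun a _ => h1 a]
          rw [Finset.sum_eq_single i (fun a _ ha => by simp [Ne.symm ha]) (by simp)]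
          simp [hi]
        · exact Finset.sum_congr rfl fun a _ => by
            rw [Finset.sum_eq_single i (fun b _ hb => by simp [Ne.symm hb]) (by simp)]
            simp
        · rw [Finset.sum_comm]
          exact Finset.sum_congr rfl fun b _ => by
            rw [Finset.sum_eq_single i (fun a _ ha => by simp [Ne.symm ha]) (by simp)]
            simp
    _ = ∑ k : Fin n, ((if k < m then y k * T k m i else 0) + y k * T i m k +
          (if k < i then y k * T k i m else 0) - (if i < k then y k * T i k m else 0)) := by
        simp [Finset.sum_add_distrib, Finset.sum_sub_distrib]
    _ = ∑ k : Fin n, ((if k < i then (T k i m + T i m k + T k m i) * y k else 0) +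
          (if k = i then 2 * T i m i * y k else 0) +
          (if i < k ∧ k < m then (-(T i k m) + T i m k + T k m i) * y k else 0)) := by
        refine Finset.sum_congr rfl fun k _ => ?_
        rcases lt_trichotomy k i with h | h | h
        · have hkm : k < m := h.trans hi
          simp [h, hkm, h.ne, asymm h]
          ring
        · subst h
          simp [hi, lt_irrefl]
          ring
        · by_cases hkm : k < m
          · simp [h, hkm, asymm h, h.ne']
            ring
          · have hk : k = m := le_antisymm (hm k) (not_lt.1 hkm)
            subst hk
            simp [h, asymm h, lt_irrefl, h.ne']
    _ = (∑ k : Fin n, if k < i then (T k i m + T i m k + T k m i) * y k else 0) +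
        2 * T i m i * y i +
        (∑ k : Fin n, if i < k ∧ k < m then (-(T i k m) + T i m k + T k m i) * y k else 0) := by
        rw [Finset.sum_add_distrib, Finset.sum_add_distrib]
        congr 1
        congr 1
        rw [Finset.sum_ite_eq' univ i (fun k => 2 * T i m i * y k)]
        simp

/-- The last index `n` of `{1,…,n}`, realized as the final element of `Fin n`. -/
def lastIdx (n : ℕ) (hn : 1 ≤ n) : Fin n := ⟨n - 1, by omega⟩

/-- The coefficient `σ_{ab;i}^c(y) = (δᵢᶜyₐ + δᵢᵃy_c)δ_bⁿ + (δᵢᵇyₐ − δᵢᵃy_b)δ_cⁿ` of the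
torsion component `T_{ab}^c` in the `i`-th compatibility equation of a Randers metric. -/
noncomputable def sigma (n : ℕ) (hn : 1 ≤ n) (a b c i : Fin n) (y : Fin n → ℝ) : ℝ :=
  ((if i = c then (1 : ℝ) else 0) * y a + (if i = a then (1 : ℝ) else 0) * y c) *
      (if b = lastIdx n hn then (1 : ℝ) else 0) +
    ((if i = b then (1 : ℝ) else 0) * y a - (if i = a then (1 : ℝ) else 0) * y b) *
      (if c = lastIdx n hn then (1 : ℝ) else 0)

/-- A torsion-type tensor: a family `T_{ab}^c` of reals, skew-symmetric in the lower
indices. -/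
def IsSkew (n : ℕ) (T : Fin n → Fin n → Fin n → ℝ) : Prop :=
  ∀ a b c, T a b c = - T b a c

/-- The left-hand side `Σ_{a<b, c} σ_{ab;i}^c(y)·T_{ab}^c` of the `i`-th compatibility
equation. -/
noncomputable def compatLHS (n : ℕ) (hn : 1 ≤ n) (T : Fin n → Fin n → Fin n → ℝ)
    (i : Fin n) (y : Fin n → ℝ) : ℝ :=
  ∑ a : Fin n, ∑ b : Fin n, ∑ c : Fin n,
    if a < b then sigma n hn a b c i y * T a b c else 0

/-- for `i ∈ {1,…,n−1}`, the left-hand side of the `i`-th compatibility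
equation equals
`Σ_{k<i} (T_{ki}^n + T_{in}^k + T_{kn}^i)·y_k + 2·T_{in}^i·y_i
  + Σ_{i<k<n} (−T_{ik}^n + T_{in}^k + T_{kn}^i)·y_k`;
in particular `yₙ` does not occur. -/
theorem ith_equation_lhs (n : ℕ) (hn : 2 ≤ n) (T : Fin n → Fin n → Fin n → ℝ)
    (hT : IsSkew n T) (i : Fin n) (hi : i < lastIdx n (by omega)) :
    ∀ y : Fin n → ℝ,
      compatLHS n (by omega) T i y =
        (∑ k : Fin n,
            if k < i then
              (T k i (lastIdx n (by omega)) + T i (lastIdx n (by omega)) k +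
                  T k (lastIdx n (by omega)) i) * y k
            else 0) +
          2 * T i (lastIdx n (by omega)) i * y i +
          (∑ k : Fin n,
            if i < k ∧ k < lastIdx n (by omega) then
              (-(T i k (lastIdx n (by omega))) + T i (lastIdx n (by omega)) k +
                  T k (lastIdx n (by omega)) i) * y k
            else 0) := by
  intro y
  have hm : ∀ k : Fin n, k ≤ lastIdx n (by omega : 1 ≤ n) := fun k => by
    have hk := k.isLt
    simp only [lastIdx, Fin.le_def]
    omega
  simp only [compatLHS, sigma]
  exact aux_sum n T i (lastIdx n (by omega)) hm hi y
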